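/- In ℝ^{p+q} with the product Weyl group W = W(B_p) × W(B_q) acting by signed permutations on the coordinates ε_1,...,ε_p and ε_{p+1},...,ε_{p+q} separately, with dominance λ_1 ≥ ... ≥ λ_p ≥ 0 and λ_{p+1} ≥ ... ≥ λ_{p+q} ≥ 0, for 1 ≤ a ≤ p and p+1 ≤ b ≤ p+q the index of ε_a - ε_b equals (a-1) + (p+q-b) + q and the index of -ε_a + ε_b equals (b-(p+1)) + (p-a) + p. -/

import Mathlib

noncomputable section

/-- The `i`-th standard basis vector of `ℝ^r`. -/
def eps (r : ℕ) (i : Fin r) : Fin r → ℝ := fun k => if k = i then 1 else 0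

/-- Linear automorphisms of `ℝ^r`. -/
abbrev Aut (r : ℕ) := (Fin r → ℝ) ≃ₗ[ℝ] (Fin r → ℝ)

/-- The automorphism permuting coordinates by `e` (i.e. `v ↦ v ∘ e`). -/
def permAut {r : ℕ} (e : Equiv.Perm (Fin r)) : Aut r :=
  LinearEquiv.funCongrLeft ℝ ℝ e

/-- The automorphism negating the `i`-th coordinate. -/
def flipAut {r : ℕ} (i : Fin r) : Aut r :=
  LinearEquiv.piCongrRight (fun k => if k = i then LinearEquiv.neg ℝ else LinearEquiv.refl ℝ ℝ)

/-- `ind`: minimal length of a word in the simple generators whose product moves `lam` into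
the dominant cone (this is the minimal Coxeter length of `w ∈ W` with `w • lam` dominant). -/
def ind (r : ℕ) (isGen : Aut r → Prop) (dom : (Fin r → ℝ) → Prop) (lam : Fin r → ℝ) : ℕ :=
  sInf { n | ∃ l : List (Aut r), (∀ g ∈ l, isGen g) ∧ l.length = n ∧ dom (l.prod lam) }

/-- Simple generators of the symmetric group `S_r` (type `A_{r-1}`): adjacent transpositions. -/
def isGenA (r : ℕ) (g : Aut r) : Prop :=
  ∃ i j : Fin r, (i : ℕ) + 1 = (j : ℕ) ∧ g = permAut (Equiv.swap i j)

/-- Type `A` dominance: weakly decreasing coordinates. -/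
def domA (r : ℕ) (v : Fin r → ℝ) : Prop := ∀ i j : Fin r, i ≤ j → v j ≤ v i

/-- Simple generators of the hyperoctahedral group (Weyl group of type `B_r`/`C_r`):
adjacent transpositions and the sign flip of the last coordinate. -/
def isGenBC (r : ℕ) (g : Aut r) : Prop :=
  (∃ i j : Fin r, (i : ℕ) + 1 = (j : ℕ) ∧ g = permAut (Equiv.swap i j)) ∨
  (∃ h : r - 1 < r, g = flipAut ⟨r - 1, h⟩)

/-- Type `B/C` dominance: `λ₁ ≥ ⋯ ≥ λ_r ≥ 0`. -/
def domBC (r : ℕ) (v : Fin r → ℝ) : Prop :=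
  (∀ i j : Fin r, i ≤ j → v j ≤ v i) ∧ ∀ i, 0 ≤ v i

/-- Simple generators of the Weyl group of type `D_r`: adjacent transpositions and the
reflection in `ε_{r-1} + ε_r` (swap the last two coordinates and negate both). -/
def isGenD (r : ℕ) (g : Aut r) : Prop :=
  (∃ i j : Fin r, (i : ℕ) + 1 = (j : ℕ) ∧ g = permAut (Equiv.swap i j)) ∨
  (∃ (h1 : r - 2 < r) (h2 : r - 1 < r),
    g = flipAut ⟨r - 2, h1⟩ * flipAut ⟨r - 1, h2⟩ *
      permAut (Equiv.swap ⟨r - 2, h1⟩ ⟨r - 1, h2⟩))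

/-- Type `D` dominance: `λ₁ ≥ ⋯ ≥ λ_{r-1} ≥ |λ_r|`. -/
def domD (r : ℕ) (v : Fin r → ℝ) : Prop :=
  (∀ i j : Fin r, i ≤ j → (j : ℕ) + 1 < r → v j ≤ v i) ∧
  (∀ i : Fin r, (i : ℕ) + 1 < r → ∀ h : r - 1 < r, |v ⟨r - 1, h⟩| ≤ v i)

/-- Simple generators of `W(B_p) × W(B_q)` acting on `ℝ^{p+q}`: adjacent transpositions
within each block, and the sign flips of the last coordinate of each block. -/
def isGenBB (p q : ℕ) (g : Aut (p + q)) : Prop :=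
  (∃ i j : Fin (p + q), (i : ℕ) + 1 = (j : ℕ) ∧ ((j : ℕ) < p ∨ p ≤ (i : ℕ)) ∧
    g = permAut (Equiv.swap i j)) ∨
  (∃ h : p - 1 < p + q, 1 ≤ p ∧ g = flipAut ⟨p - 1, h⟩) ∨
  (∃ h : p + q - 1 < p + q, 1 ≤ q ∧ g = flipAut ⟨p + q - 1, h⟩)

/-- Dominance for `W(B_p) × W(B_q)`: each block weakly decreasing and nonnegative. -/
def domBB (p q : ℕ) (v : Fin (p + q) → ℝ) : Prop :=
  (∀ i j : Fin (p + q), i ≤ j → (j : ℕ) < p → v j ≤ v i) ∧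
  (∀ i j : Fin (p + q), i ≤ j → p ≤ (i : ℕ) → v j ≤ v i) ∧
  (∀ i, 0 ≤ v i)

/-- Simple generators of `W(D_p) × W(B_q)` acting on `ℝ^{p+q}`. -/
def isGenDB (p q : ℕ) (g : Aut (p + q)) : Prop :=
  (∃ i j : Fin (p + q), (i : ℕ) + 1 = (j : ℕ) ∧ ((j : ℕ) < p ∨ p ≤ (i : ℕ)) ∧
    g = permAut (Equiv.swap i j)) ∨
  (∃ (h1 : p - 2 < p + q) (h2 : p - 1 < p + q), 2 ≤ p ∧
    g = flipAut ⟨p - 2, h1⟩ * flipAut ⟨p - 1, h2⟩ *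
      permAut (Equiv.swap ⟨p - 2, h1⟩ ⟨p - 1, h2⟩)) ∨
  (∃ h : p + q - 1 < p + q, 1 ≤ q ∧ g = flipAut ⟨p + q - 1, h⟩)

/-- Dominance for `W(D_p) × W(B_q)`: `v₁ ≥ ⋯ ≥ v_{p-1} ≥ |v_p|` on the first block and
`v_{p+1} ≥ ⋯ ≥ v_{p+q} ≥ 0` on the second. -/
def domDB (p q : ℕ) (v : Fin (p + q) → ℝ) : Prop :=
  (∀ i j : Fin (p + q), i ≤ j → (j : ℕ) + 1 < p → v j ≤ v i) ∧
  (∀ i : Fin (p + q), (i : ℕ) + 1 < p → ∀ h : p - 1 < p + q, |v ⟨p - 1, h⟩| ≤ v i) ∧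
  (∀ i j : Fin (p + q), i ≤ j → p ≤ (i : ℕ) → v j ≤ v i) ∧
  (∀ i : Fin (p + q), p ≤ (i : ℕ) → 0 ≤ v i)

/-!
The orbit of `ε_a - ε_b` (and of `-ε_a + ε_b`) consists of the vectors `±ε_i ± ε_j` with `i` in
the first block and `j` in the second, since each simple reflection is a signed permutation of
one block. Give such a vector the potential obtained by adding, in each block, the number of
moves needed to bring its signed unit vector to `+ε` at the front of the block. A simple reflection
changes the potential by at most one, some simple reflection lowers a positive potential by one,
and the potential vanishes exactly on the dominant vector `ε_1 + ε_{p+1}`; so it is the index.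
-/

section Potential

variable {r : ℕ} {isGen : Aut r → Prop} {dom : (Fin r → ℝ) → Prop}
  {σ : Type*} (f : σ → Fin r → ℝ) (φ : σ → ℕ)

theorem exists_prod_apply_eq_of_step
    (h_step : ∀ x g, isGen g → ∃ y, g (f x) = f y ∧ φ x ≤ φ y + 1)
    (l : List (Aut r)) (hl : ∀ g ∈ l, isGen g) (x : σ) :
    ∃ y, l.prod (f x) = f y ∧ φ x ≤ φ y + l.length := by
  induction l using List.reverseRecOn generalizing x with
  | nil => exact ⟨x, rfl, le_rfl⟩
  | append_singleton l g ih =>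
    obtain ⟨y, hgy, hxy⟩ := h_step x g (hl g (by simp))
    obtain ⟨z, hlz, hyz⟩ := ih (fun g' hg' => hl g' (by simp [hg'])) y
    refine ⟨z, ?_, ?_⟩
    · rw [List.prod_append, List.prod_singleton, LinearEquiv.mul_apply, hgy, hlz]
    · simp only [List.length_append, List.length_singleton]
      omega

theorem exists_word_length_eq_of_descent
    (h_zero : ∀ x, φ x = 0 → dom (f x))
    (h_descent : ∀ x, φ x ≠ 0 → ∃ g y, isGen g ∧ g (f x) = f y ∧ φ y + 1 = φ x) (x : σ) :
    ∃ l : List (Aut r), (∀ g ∈ l, isGen g) ∧ l.length = φ x ∧ dom (l.prod (f x)) := by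
  induction hn : φ x generalizing x with
  | zero => exact ⟨[], by simp, rfl, h_zero x hn⟩
  | succ n ih =>
    obtain ⟨g, y, hg, hgy, hy⟩ := h_descent x (by omega)
    obtain ⟨l, hl, hlen, hdom⟩ := ih y (by omega)
    refine ⟨l ++ [g], ?_, by simp [hlen], ?_⟩
    · simpa [or_imp, forall_and] using ⟨hl, hg⟩
    · rwa [List.prod_append, List.prod_singleton, LinearEquiv.mul_apply, hgy]

theorem ind_eq_of_potential
    (h_dom : ∀ x, dom (f x) ↔ φ x = 0)
    (h_step : ∀ x g, isGen g → ∃ y, g (f x) = f y ∧ φ x ≤ φ y + 1)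
    (h_descent : ∀ x, φ x ≠ 0 → ∃ g y, isGen g ∧ g (f x) = f y ∧ φ y + 1 = φ x) (x : σ) :
    ind r isGen dom (f x) = φ x := by
  obtain ⟨l, hl, hlen, hdom⟩ :=
    exists_word_length_eq_of_descent f φ (fun x => (h_dom x).mpr) h_descent x
  refine le_antisymm (Nat.sInf_le ⟨l, hl, hlen, hdom⟩) (le_csInf ⟨_, l, hl, hlen, hdom⟩ ?_)
  rintro n ⟨l', hl', rfl, hdom'⟩
  obtain ⟨y, hy, hxy⟩ := exists_prod_apply_eq_of_step f φ h_step l' hl' x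
  rw [hy, h_dom] at hdom'
  omega

end Potential

def boolSign (s : Bool) : ℝ := if s then 1 else -1

theorem boolSign_not (s : Bool) : boolSign (!s) = -boolSign s := by
  cases s <;> simp [boolSign]

theorem boolSign_nonneg_iff {s : Bool} : 0 ≤ boolSign s ↔ s = true := by
  cases s <;> norm_num [boolSign]

def signedEps (r : ℕ) (k : Fin r) (s : Bool) : Fin r → ℝ := boolSign s • eps r k

section SignedEps

variable {r : ℕ}

theorem signedEps_apply (k : Fin r) (s : Bool) (m : Fin r) :
    signedEps r k s m = if m = k then boolSign s else 0 := by
  simp [signedEps, eps]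

theorem permAut_signedEps (e : Equiv.Perm (Fin r)) (k : Fin r) (s : Bool) :
    permAut e (signedEps r k s) = signedEps r (e.symm k) s := by
  funext m
  simp [permAut, LinearEquiv.funCongrLeft, signedEps_apply, Equiv.eq_symm_apply]

theorem flipAut_signedEps (x k : Fin r) (s : Bool) :
    flipAut x (signedEps r k s) = signedEps r k (if k = x then !s else s) := by
  funext m
  by_cases hm : m = x <;> by_cases hk : m = k <;>
    simp_all [flipAut, signedEps_apply, boolSign_not]

end SignedEps

def IsBlockGen {r : ℕ} (o e : ℕ) (g : Aut r) : Prop :=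
  (∃ x y : Fin r, (x : ℕ) + 1 = y ∧ o ≤ x ∧ (y : ℕ) < e ∧ g = permAut (Equiv.swap x y)) ∨
  (∃ h : e - 1 < r, o < e ∧ g = flipAut ⟨e - 1, h⟩)

/-- `+ε_k` reaches the front `o` of its block in `k - o` moves, while `-ε_k` must travel to the
back `e - 1`, flip, and travel to the front: `(e - 1 - k) + 1 + (e - 1 - o)` moves. -/
def blockCost (o e k : ℕ) (s : Bool) : ℕ := if s then k - o else 2 * e - 1 - k - o

theorem isGenBB_iff {p q : ℕ} (g : Aut (p + q)) :
    isGenBB p q g ↔ IsBlockGen 0 p g ∨ IsBlockGen p (p + q) g := by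
  constructor
  · rintro (⟨x, y, hxy, hy | hx, rfl⟩ | ⟨h, hp, rfl⟩ | ⟨h, hq, rfl⟩)
    · exact Or.inl (Or.inl ⟨x, y, hxy, x.val.zero_le, hy, rfl⟩)
    · exact Or.inr (Or.inl ⟨x, y, hxy, hx, y.isLt, rfl⟩)
    · exact Or.inl (Or.inr ⟨h, hp, rfl⟩)
    · exact Or.inr (Or.inr ⟨h, by omega, rfl⟩)
  · rintro ((⟨x, y, hxy, -, hy, rfl⟩ | ⟨h, hp, rfl⟩) | (⟨x, y, hxy, hx, -, rfl⟩ | ⟨h, hq, rfl⟩))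
    · exact Or.inl ⟨x, y, hxy, Or.inl hy, rfl⟩
    · exact Or.inr (Or.inl ⟨h, hp, rfl⟩)
    · exact Or.inl ⟨x, y, hxy, Or.inr hx, rfl⟩
    · exact Or.inr (Or.inr ⟨h, by omega, rfl⟩)

section Block

variable {r o e : ℕ} {k : Fin r}

theorem blockCost_eq_zero_iff (hok : o ≤ k) (hke : (k : ℕ) < e) (s : Bool) :
    blockCost o e k s = 0 ↔ s = true ∧ (k : ℕ) = o := by
  cases s <;> simp [blockCost] <;> omega

theorem IsBlockGen.apply_signedEps_of_not_mem {g : Aut r} (hg : IsBlockGen o e g)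
    (hk : (k : ℕ) < o ∨ e ≤ k) (s : Bool) : g (signedEps r k s) = signedEps r k s := by
  rcases hg with ⟨x, y, hxy, hox, hye, rfl⟩ | ⟨h, hoe, rfl⟩
  · rw [permAut_signedEps, Equiv.symm_swap,
      Equiv.swap_apply_of_ne_of_ne (Fin.ne_of_val_ne (by omega)) (Fin.ne_of_val_ne (by omega))]
  · rw [flipAut_signedEps, if_neg (Fin.ne_of_val_ne (by simp; omega))]

theorem IsBlockGen.exists_apply_signedEps {g : Aut r} (hg : IsBlockGen o e g)
    (hok : o ≤ k) (hke : (k : ℕ) < e) (s : Bool) :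
    ∃ (k' : Fin r) (s' : Bool), o ≤ k' ∧ (k' : ℕ) < e ∧
      g (signedEps r k s) = signedEps r k' s' ∧
        blockCost o e k s ≤ blockCost o e k' s' + 1 := by
  rcases hg with ⟨x, y, hxy, hox, hye, rfl⟩ | ⟨h, -, rfl⟩
  · have hk' : (Equiv.swap x y k : ℕ) = k ∨ (k : ℕ) = x ∧ (Equiv.swap x y k : ℕ) = y ∨
        (k : ℕ) = y ∧ (Equiv.swap x y k : ℕ) = x := by
      rw [Equiv.swap_apply_def]
      split_ifs <;> simp_all
    refine ⟨Equiv.swap x y k, s, by omega, by omega, ?_, ?_⟩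
    · rw [permAut_signedEps, Equiv.symm_swap]
    · cases s <;> simp [blockCost] <;> omega
  · refine ⟨k, _, hok, hke, flipAut_signedEps _ _ _, ?_⟩
    split_ifs with hx
    · have : (k : ℕ) = e - 1 := by simp [hx]
      cases s <;> simp [blockCost] <;> omega
    · omega

theorem exists_isBlockGen_blockCost_succ (her : e ≤ r) (hok : o ≤ k) (hke : (k : ℕ) < e)
    {s : Bool} (hs : blockCost o e k s ≠ 0) :
    ∃ (g : Aut r) (k' : Fin r) (s' : Bool), IsBlockGen o e g ∧ o ≤ k' ∧ (k' : ℕ) < e ∧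
      g (signedEps r k s) = signedEps r k' s' ∧
        blockCost o e k' s' + 1 = blockCost o e k s := by
  cases s with
  | true =>
    have hk : o < (k : ℕ) := by simp [blockCost] at hs; omega
    obtain ⟨x, hx⟩ : ∃ x : Fin r, (x : ℕ) + 1 = k := ⟨⟨k - 1, by omega⟩, by simp; omega⟩
    refine ⟨permAut (Equiv.swap x k), x, true, Or.inl ⟨x, k, hx, by omega, hke, rfl⟩,
      by omega, by omega, ?_, ?_⟩
    · rw [permAut_signedEps, Equiv.symm_swap, Equiv.swap_apply_right]
    · simp [blockCost]; omega
  | false =>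
    by_cases hlast : (k : ℕ) + 1 = e
    · have hk : k = ⟨e - 1, by omega⟩ := Fin.ext (by simp; omega)
      refine ⟨flipAut k, k, true, Or.inr ⟨_, by omega, by rw [hk]⟩, hok, hke, ?_, ?_⟩
      · rw [flipAut_signedEps, if_pos rfl]; rfl
      · simp [blockCost]; omega
    · obtain ⟨y, hy⟩ : ∃ y : Fin r, (k : ℕ) + 1 = y := ⟨⟨k + 1, by omega⟩, rfl⟩
      refine ⟨permAut (Equiv.swap k y), y, false, Or.inl ⟨k, y, hy, hok, by omega, rfl⟩,
        by omega, by omega, ?_, ?_⟩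
      · rw [permAut_signedEps, Equiv.symm_swap, Equiv.swap_apply_left]
      · simp [blockCost]; omega

end Block

structure SignedPair (p q : ℕ) where
  i : Fin (p + q)
  s : Bool
  j : Fin (p + q)
  t : Bool
  hi : (i : ℕ) < p
  hj : p ≤ (j : ℕ)

namespace SignedPair

variable {p q : ℕ} (x : SignedPair p q)

def vec : Fin (p + q) → ℝ := signedEps _ x.i x.s + signedEps _ x.j x.t

def cost : ℕ := blockCost 0 p x.i x.s + blockCost p (p + q) x.j x.t

theorem vec_apply (k : Fin (p + q)) :
    x.vec k = if k = x.i then boolSign x.s else if k = x.j then boolSign x.t else 0 := by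
  have hij : x.i ≠ x.j := Fin.ne_of_val_ne (by have := x.hi; have := x.hj; omega)
  by_cases hi : k = x.i
  · simp [vec, signedEps_apply, hi, hij]
  · simp [vec, signedEps_apply, hi]

theorem domBB_vec_iff : domBB p q x.vec ↔ x.cost = 0 := by
  have hi := x.hi
  have hj := x.hj
  have hjr := x.j.isLt
  simp only [cost, Nat.add_eq_zero_iff, blockCost_eq_zero_iff (Nat.zero_le _) hi,
    blockCost_eq_zero_iff hj hjr]
  constructor
  · rintro ⟨hdec₁, hdec₂, hnonneg⟩
    have hij : x.j ≠ x.i := Fin.ne_of_val_ne (by omega)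
    have hs : x.s = true := boolSign_nonneg_iff.mp (by simpa [vec_apply] using hnonneg x.i)
    have ht : x.t = true := boolSign_nonneg_iff.mp (by simpa [vec_apply, hij] using hnonneg x.j)
    have hi₀ := hdec₁ ⟨0, by omega⟩ x.i (Fin.le_def.mpr (Nat.zero_le _)) hi
    have hjp := hdec₂ ⟨p, by omega⟩ x.j (Fin.le_def.mpr hj) le_rfl
    simp only [vec_apply, hs, ht, boolSign, Fin.ext_iff, if_true] at hi₀ hjp
    refine ⟨⟨hs, ?_⟩, ⟨ht, ?_⟩⟩
    · by_contra h
      split_ifs at hi₀ <;> first | omega | norm_num at hi₀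
    · by_contra h
      split_ifs at hjp <;> first | omega | norm_num at hjp
  · rintro ⟨⟨hs, hi₀⟩, ⟨ht, hjp⟩⟩
    have hv : ∀ k : Fin (p + q), x.vec k = if (k : ℕ) = 0 ∨ (k : ℕ) = p then 1 else 0 := by
      intro k
      simp only [vec_apply, hs, ht, boolSign, Fin.ext_iff, hi₀, hjp]
      split_ifs <;> first | rfl | (exfalso; omega)
    refine ⟨fun a b hab hb => ?_, fun a b hab ha => ?_, fun a => ?_⟩
    all_goals
      simp only [hv]
      split_ifs <;> norm_num
    all_goals
      rw [Fin.le_def] at hab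
      omega

theorem exists_apply_vec_of_isGenBB {g : Aut (p + q)} (hg : isGenBB p q g) :
    ∃ y : SignedPair p q, g x.vec = y.vec ∧ x.cost ≤ y.cost + 1 := by
  have hi := x.hi
  have hj := x.hj
  have hjr := x.j.isLt
  rcases (isGenBB_iff g).mp hg with hg | hg
  · obtain ⟨i', s', -, hi', hgi, hle⟩ := hg.exists_apply_signedEps (Nat.zero_le _) hi x.s
    refine ⟨⟨i', s', x.j, x.t, hi', hj⟩, ?_, ?_⟩
    · simp only [vec, map_add, hgi, hg.apply_signedEps_of_not_mem (Or.inr hj)]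
    · simp only [cost] at hle ⊢
      omega
  · obtain ⟨j', t', hj', -, hgj, hle⟩ := hg.exists_apply_signedEps hj hjr x.t
    refine ⟨⟨x.i, x.s, j', t', hi, hj'⟩, ?_, ?_⟩
    · simp only [vec, map_add, hgj, hg.apply_signedEps_of_not_mem (Or.inl hi)]
    · simp only [cost] at hle ⊢
      omega

theorem exists_isGenBB_cost_succ (h : x.cost ≠ 0) :
    ∃ (g : Aut (p + q)) (y : SignedPair p q), isGenBB p q g ∧ g x.vec = y.vec ∧
      y.cost + 1 = x.cost := by
  have hi := x.hi
  have hj := x.hj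
  have hjr := x.j.isLt
  by_cases hs : blockCost 0 p x.i x.s = 0
  · obtain ⟨g, j', t', hg, hj', -, hgj, hlt⟩ :=
      exists_isBlockGen_blockCost_succ le_rfl hj hjr (s := x.t)
        (by simp only [cost] at h; omega)
    refine ⟨g, ⟨x.i, x.s, j', t', hi, hj'⟩, (isGenBB_iff g).mpr (Or.inr hg), ?_, ?_⟩
    · simp only [vec, map_add, hgj, hg.apply_signedEps_of_not_mem (Or.inl hi)]
    · simp only [cost]
      omega
  · obtain ⟨g, i', s', hg, -, hi', hgi, hlt⟩ :=
      exists_isBlockGen_blockCost_succ (by omega) (Nat.zero_le _) hi hs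
    refine ⟨g, ⟨i', s', x.j, x.t, hi', hj⟩, (isGenBB_iff g).mpr (Or.inl hg), ?_, ?_⟩
    · simp only [vec, map_add, hgi, hg.apply_signedEps_of_not_mem (Or.inr hj)]
    · simp only [cost]
      omega

theorem ind_vec : ind (p + q) (isGenBB p q) (domBB p q) x.vec = x.cost :=
  ind_eq_of_potential vec cost domBB_vec_iff (fun x _ => x.exists_apply_vec_of_isGenBB)
    exists_isGenBB_cost_succ x

end SignedPair

theorem eps_sub_eps {r : ℕ} (i j : Fin r) :
    eps r i - eps r j = signedEps r i true + signedEps r j false := by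
  simp [signedEps, boolSign, sub_eq_add_neg]

theorem neg_eps_add_eps {r : ℕ} (i j : Fin r) :
    -eps r i + eps r j = signedEps r i false + signedEps r j true := by
  simp [signedEps, boolSign]

theorem ind_signedEps_add_signedEps {p q : ℕ} {i j : Fin (p + q)} (hi : (i : ℕ) < p)
    (hj : p ≤ (j : ℕ)) (s t : Bool) :
    ind (p + q) (isGenBB p q) (domBB p q) (signedEps _ i s + signedEps _ j t) =
      blockCost 0 p i s + blockCost p (p + q) j t :=
  SignedPair.ind_vec ⟨i, s, j, t, hi, hj⟩

/-- In `ℝ^{p+q}` with the product Weyl group `W(B_p) × W(B_q)` acting by signed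
permutations of the two blocks separately: for `1 ≤ a ≤ p < b ≤ p+q`,
`ind(ε_a - ε_b) = (a-1) + (p+q-b) + q` and `ind(-ε_a + ε_b) = (b-(p+1)) + (p-a) + p`. -/
theorem ind_typeBpBq (p q a b : ℕ)
    (ha : 1 ≤ a) (hap : a ≤ p) (hpb : p < b) (hbr : b ≤ p + q) :
    ind (p + q) (isGenBB p q) (domBB p q)
      (eps (p + q) ⟨a - 1, by omega⟩ - eps (p + q) ⟨b - 1, by omega⟩)
      = (a - 1) + (p + q - b) + q ∧
    ind (p + q) (isGenBB p q) (domBB p q)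
      (-eps (p + q) ⟨a - 1, by omega⟩ + eps (p + q) ⟨b - 1, by omega⟩)
      = (b - (p + 1)) + (p - a) + p := by
  have hi : a - 1 < p := by omega
  have hj : p ≤ b - 1 := by omega
  rw [eps_sub_eps, neg_eps_add_eps, ind_signedEps_add_signedEps hi hj,
    ind_signedEps_add_signedEps hi hj]
  simp only [blockCost, if_true, Bool.false_eq_true, if_false]
  omega
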